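/- Let N ≥ 1 be an integer, τ ∈ ℍ, z, w ∈ ℂ with w ∉ ℤτ + ℤ, and m₁, m₂, ℓ₁, ℓ₂ ∈ ℤ. Then, with ζ := e^{2πiz}, ξ := e^{2πiw}, q := e^{2πiτ}, the completed function f̂_N satisfies the elliptic transformation f̂_N(z + m₁τ + ℓ₁, w + m₂τ + ℓ₂; τ) = ζ^{−m₂}·ξ^{2Nm₂ − m₁}·q^{Nm₂² − m₁m₂}·f̂_N(z,w;τ). -/

import Mathlib

set_option maxHeartbeats 1000000


open Complex

noncomputable section

/-- The general term `e^{2πi(mz+nw)} · q^{Nm²+mn}` with `q = e^{2πiτ}`. -/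
def fterm (N : ℕ) (z w τ : ℂ) (m n : ℤ) : ℂ :=
  Complex.exp (2 * Real.pi * I * ((m : ℂ) * z + (n : ℂ) * w)) *
    Complex.exp (2 * Real.pi * I * τ) ^ ((N : ℤ) * m ^ 2 + m * n)

/-- `f_N(z,w;τ) = Σ_{m≥1,n≥0} e^{2πi(mz+nw)} q^{Nm²+mn} − Σ_{m≤0,n≤−1} e^{2πi(mz+nw)} q^{Nm²+mn}`. -/
def fN (N : ℕ) (z w τ : ℂ) : ℂ :=
  (∑' p : {p : ℤ × ℤ // 1 ≤ p.1 ∧ 0 ≤ p.2}, fterm N z w τ p.1.1 p.1.2) -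
    ∑' p : {p : ℤ × ℤ // p.1 ≤ 0 ∧ p.2 ≤ -1}, fterm N z w τ p.1.1 p.1.2

/-- Zwegers' level-`ℓ` Appell function
`A_ℓ(z,w;τ) = e^{πiℓz} Σ_{m∈ℤ} (−1)^{ℓm} q^{ℓm(m+1)/2} e^{2πimw} / (1 − e^{2πiz} q^m)`,
where `q^{ℓm(m+1)/2} = e^{πiτℓm(m+1)}`. -/
def appell (ℓ : ℕ) (z w τ : ℂ) : ℂ :=
  Complex.exp (Real.pi * I * ℓ * z) *
    ∑' m : ℤ, (-1 : ℂ) ^ ((ℓ : ℤ) * m) * Complex.exp (Real.pi * I * τ * ℓ * m * (m + 1)) *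
      Complex.exp (2 * Real.pi * I * m * w) /
        (1 - Complex.exp (2 * Real.pi * I * z) * Complex.exp (2 * Real.pi * I * τ) ^ m)

/-- The Jacobi theta function `ϑ(z;τ) = Σ_{n∈ℤ+1/2} e^{2πin(z+1/2)} q^{n²/2}`, written with
`n = k + 1/2`, `k ∈ ℤ`, and `q^{n²/2} = e^{πiτn²}`. -/
def thetaFn (z τ : ℂ) : ℂ :=
  ∑' k : ℤ, Complex.exp (2 * Real.pi * I * ((k : ℂ) + 1 / 2) * (z + 1 / 2)) *
    Complex.exp (Real.pi * I * τ * ((k : ℂ) + 1 / 2) ^ 2)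

/-- `E(x) = 2∫₀ˣ e^{−πt²} dt`. -/
def Efun (x : ℝ) : ℝ := 2 * ∫ t in (0:ℝ)..x, Real.exp (-Real.pi * t ^ 2)

/-- `R(z;τ) = Σ_{n∈ℤ+1/2} (sgn(n) − E((n + Im z/Im τ)√(2 Im τ))) (−1)^{n−1/2} q^{−n²/2} e^{−2πinz}`,
written with `n = k + 1/2`, `k ∈ ℤ`. -/
def RFn (z τ : ℂ) : ℂ :=
  ∑' k : ℤ, (((if (0:ℤ) ≤ k then (1:ℝ) else -1) -
      Efun (((k : ℝ) + 1 / 2 + z.im / τ.im) * Real.sqrt (2 * τ.im)) : ℝ) : ℂ) *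
    (-1 : ℂ) ^ k * Complex.exp (-Real.pi * I * τ * ((k : ℂ) + 1 / 2) ^ 2) *
      Complex.exp (-2 * Real.pi * I * ((k : ℂ) + 1 / 2) * z)

/-- Zwegers' completed Appell function `Â_ℓ`. -/
def appellHat (ℓ : ℕ) (z w τ : ℂ) : ℂ :=
  appell ℓ z w τ + (I / 2) * ∑ k ∈ Finset.range ℓ,
    Complex.exp (2 * Real.pi * I * k * z) *
      thetaFn (w + k * τ + ((ℓ : ℂ) - 1) / 2) (ℓ * τ) *
        RFn ((ℓ : ℂ) * z - w - k * τ - ((ℓ : ℂ) - 1) / 2) (ℓ * τ)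

/-- The completed function `f̂_N(z,w;τ) := Â_{2N}(w,z;τ)`. -/
def fNhat (N : ℕ) (z w τ : ℂ) : ℂ := appellHat (2 * N) w z τ

section aux
open Real




lemma exp_eq_of_diff_int {A B : ℂ} (m : ℤ) (h : A = B + m * (2*(π:ℂ)*I)) :
    Complex.exp A = Complex.exp B := by
  rw [h, Complex.exp_add, Complex.exp_int_mul_two_pi_mul_I, mul_one]

lemma exp_pi_I_div_two : Complex.exp ((π:ℂ)*I/2) = I := by
  have : ((π:ℂ)*I/2) = (π/2 : ℝ) * I := by push_cast; ring
  rw [this, Complex.exp_mul_I]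
  simp [Complex.cos_ofReal_re, Real.cos_pi_div_two, Real.sin_pi_div_two]


lemma exp_add_pi_I (X : ℂ) : Complex.exp (X + (π:ℂ)*I) = -Complex.exp X := by
  rw [Complex.exp_add, Complex.exp_pi_mul_I, mul_neg_one]

/-- `thetaFn` in terms of `jacobiTheta₂`. -/
lemma thetaFn_eq (z τ : ℂ) :
    thetaFn z τ = Complex.exp ((π:ℂ)*I*τ/4 + π*I*(z + 1/2)) * jacobiTheta₂ (z + 1/2 + τ/2) τ := by
  rw [jacobiTheta₂, ← tsum_mul_left, thetaFn]
  refine tsum_congr fun k => ?_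
  rw [jacobiTheta₂_term, ← Complex.exp_add, ← Complex.exp_add]
  congr 1
  ring

lemma jacobiTheta₂_add_int (z τ : ℂ) (n : ℤ) : jacobiTheta₂ (z + n) τ = jacobiTheta₂ z τ := by
  induction n using Int.induction_on with
  | zero => simp
  | succ k ih =>
      have : z + ((k:ℤ)+1:ℤ) = (z + (k:ℤ)) + 1 := by push_cast; ring
      rw [this, jacobiTheta₂_add_left, ih]
  | pred k ih =>
      have : z + ((-k:ℤ)-1:ℤ) + 1 = z + (-(k:ℤ):ℤ) := by push_cast; ring
      rw [← ih, ← this, jacobiTheta₂_add_left]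

lemma thetaFn_add_one (z τ : ℂ) : thetaFn (z + 1) τ = -thetaFn z τ := by
  rw [thetaFn_eq, thetaFn_eq, show z + 1 + 1/2 + τ/2 = (z + 1/2 + τ/2) + 1 by ring,
    jacobiTheta₂_add_left]
  rw [show (π:ℂ)*I*τ/4 + π*I*(z+1+1/2) = ((π:ℂ)*I*τ/4 + π*I*(z+1/2)) + π*I by ring,
    Complex.exp_add, Complex.exp_pi_mul_I]
  ring

lemma thetaFn_add_int (z τ : ℂ) (n : ℤ) :
    thetaFn (z + n) τ = Complex.exp ((n:ℂ)*π*I) * thetaFn z τ := by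
  rw [thetaFn_eq, thetaFn_eq, show z + (n:ℂ) + 1/2 + τ/2 = (z + 1/2 + τ/2) + n by ring,
    jacobiTheta₂_add_int, ← mul_assoc, ← Complex.exp_add]
  congr 2
  ring

lemma thetaFn_add_T (y T : ℂ) :
    thetaFn (y + T) T = -(Complex.exp (-(π:ℂ)*I*T) * Complex.exp (-2*(π:ℂ)*I*y)) * thetaFn y T := by
  rw [thetaFn_eq, thetaFn_eq, show y + T + 1/2 + T/2 = (y + 1/2 + T/2) + T by ring,
    jacobiTheta₂_add_left', ← mul_assoc, ← Complex.exp_add]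
  have : Complex.exp ((π:ℂ)*I*T/4 + π*I*(y+T+1/2) + (-π*I*(T + 2*(y+1/2+T/2)))) =
      -(Complex.exp (-(π:ℂ)*I*T) * Complex.exp (-2*(π:ℂ)*I*y) * Complex.exp ((π:ℂ)*I*T/4 + π*I*(y+1/2))) := by
    rw [← Complex.exp_add, ← Complex.exp_add,
      show (-(π:ℂ)*I*T) + (-2*(π:ℂ)*I*y) + ((π:ℂ)*I*T/4 + π*I*(y+1/2)) =
        ((π:ℂ)*I*T/4 + π*I*(y+T+1/2) + (-π*I*(T + 2*(y+1/2+T/2)))) + π*I by ring,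
      exp_add_pi_I]
    ring
  rw [this]
  ring

end aux
section Rpart
open Real

/-- Summand of `RFn`. -/
def Rterm (z τ : ℂ) (k : ℤ) : ℂ :=
  (((if (0:ℤ) ≤ k then (1:ℝ) else -1) -
      Efun (((k : ℝ) + 1 / 2 + z.im / τ.im) * Real.sqrt (2 * τ.im)) : ℝ) : ℂ) *
    (-1 : ℂ) ^ k * Complex.exp (-Real.pi * I * τ * ((k : ℂ) + 1 / 2) ^ 2) *
      Complex.exp (-2 * Real.pi * I * ((k : ℂ) + 1 / 2) * z)

/-- Auxiliary shifted summand. -/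
def Rterm' (z τ : ℂ) (j : ℤ) : ℂ :=
  (((if (0:ℤ) ≤ j + 1 then (1:ℝ) else -1) -
      Efun (((j : ℝ) + 1 / 2 + z.im / τ.im) * Real.sqrt (2 * τ.im)) : ℝ) : ℂ) *
    (-1 : ℂ) ^ j * Complex.exp (-Real.pi * I * τ * ((j : ℂ) + 1 / 2) ^ 2) *
      Complex.exp (-2 * Real.pi * I * ((j : ℂ) + 1 / 2) * z)

lemma RFn_eq (z τ : ℂ) : RFn z τ = ∑' k : ℤ, Rterm z τ k := rfl

lemma RFn_add_int (z τ : ℂ) (j : ℤ) :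
    RFn (z + (j:ℂ)) τ = Complex.exp ((j:ℂ)*π*I) * RFn z τ := by
  rw [RFn_eq, RFn_eq, ← tsum_mul_left]
  refine tsum_congr fun k => ?_
  unfold Rterm
  have him : (z + (j:ℂ)).im = z.im := by simp
  rw [him]
  have he : Complex.exp (-2 * (π:ℝ) * I * ((k:ℂ) + 1 / 2) * (z + (j:ℂ))) =
      Complex.exp ((j:ℂ)*π*I) * Complex.exp (-2 * (π:ℝ) * I * ((k:ℂ) + 1 / 2) * z) := by
    rw [← Complex.exp_add]
    exact exp_eq_of_diff_int (-(j*(k+1))) (by push_cast; ring)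
  rw [he]; ring

lemma RFn_sub_T (z T : ℂ) (hT : T.im ≠ 0) (hsum : Summable (Rterm z T)) :
    RFn (z - T) T = -(Complex.exp ((π:ℂ)*I*T) * Complex.exp (-2*(π:ℂ)*I*z)) * RFn z T
      + 2 * Complex.exp ((π:ℂ)*I*T) * Complex.exp (-2*(π:ℂ)*I*z) *
          Complex.exp (-(π:ℂ)*I*T/4) * Complex.exp ((π:ℂ)*I*z) := by
  set c : ℂ := -(Complex.exp ((π:ℂ)*I*T) * Complex.exp (-2*(π:ℂ)*I*z)) with hc
  have step1 : ∀ k : ℤ, Rterm (z - T) T k = c * Rterm' z T (k - 1) := by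
    intro k
    unfold Rterm Rterm'
    have him : ((z - T).im) / T.im = z.im / T.im - 1 := by
      rw [Complex.sub_im]; field_simp
    rw [him]
    have harg : ((k : ℝ) + 1 / 2 + (z.im / T.im - 1)) = (((k - 1 : ℤ) : ℝ) + 1 / 2 + z.im / T.im) := by
      push_cast; ring
    rw [harg]
    have hif : (if (0:ℤ) ≤ k then (1:ℝ) else -1) = (if (0:ℤ) ≤ (k-1) + 1 then (1:ℝ) else -1) := by
      norm_num
    rw [hif]
    have hsgn : (-1:ℂ)^k = (-1:ℂ)^(k-1) * (-1) := by
      have h := zpow_add₀ (by norm_num : (-1:ℂ) ≠ 0) (k-1) 1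
      simp only [zpow_one] at h
      rw [← h]
      congr 1
      ring
    rw [hsgn]
    have hexp : Complex.exp (-(π:ℝ) * I * T * ((k:ℂ) + 1 / 2) ^ 2) *
        Complex.exp (-2 * (π:ℝ) * I * ((k:ℂ) + 1 / 2) * (z - T)) =
        (Complex.exp ((π:ℂ)*I*T) * Complex.exp (-2*(π:ℂ)*I*z)) *
          (Complex.exp (-(π:ℝ) * I * T * (((k - 1:ℤ):ℂ) + 1 / 2) ^ 2) *
            Complex.exp (-2 * (π:ℝ) * I * (((k - 1:ℤ):ℂ) + 1 / 2) * z)) := by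
      rw [← Complex.exp_add, ← Complex.exp_add, ← Complex.exp_add, ← Complex.exp_add]
      congr 1
      push_cast
      ring
    calc (((if (0:ℤ) ≤ (k-1) + 1 then (1:ℝ) else -1) -
          Efun ((((k - 1 : ℤ) : ℝ) + 1 / 2 + z.im / T.im) * Real.sqrt (2 * T.im)) : ℝ) : ℂ) *
        ((-1 : ℂ) ^ (k-1) * (-1)) * Complex.exp (-(π:ℝ) * I * T * ((k : ℂ) + 1 / 2) ^ 2) *
          Complex.exp (-2 * (π:ℝ) * I * ((k : ℂ) + 1 / 2) * (z - T))
        = -((((if (0:ℤ) ≤ (k-1) + 1 then (1:ℝ) else -1) -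
          Efun ((((k - 1 : ℤ) : ℝ) + 1 / 2 + z.im / T.im) * Real.sqrt (2 * T.im)) : ℝ) : ℂ) *
        (-1 : ℂ) ^ (k-1) * (Complex.exp (-(π:ℝ) * I * T * ((k : ℂ) + 1 / 2) ^ 2) *
          Complex.exp (-2 * (π:ℝ) * I * ((k : ℂ) + 1 / 2) * (z - T)))) := by ring
      _ = c * Rterm' z T (k - 1) := by rw [hexp, hc]; unfold Rterm'; ring
  have hre : (∑' k : ℤ, Rterm' z T (k - 1)) = ∑' j : ℤ, Rterm' z T j := by
    have := (Equiv.subRight (1:ℤ)).tsum_eq (Rterm' z T)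
    simpa [Equiv.subRight] using this
  have step2 : RFn (z - T) T = c * ∑' j : ℤ, Rterm' z T j := by
    rw [RFn_eq]
    calc (∑' k : ℤ, Rterm (z - T) T k) = ∑' k : ℤ, c * Rterm' z T (k - 1) := tsum_congr step1
      _ = c * ∑' k : ℤ, Rterm' z T (k - 1) := tsum_mul_left
      _ = c * ∑' j : ℤ, Rterm' z T j := by rw [hre]
  have step3 : ∀ j : ℤ, Rterm' z T j = Rterm z T j +
      (if j = -1 then (-2) * Complex.exp (-(π:ℂ)*I*T/4) * Complex.exp ((π:ℂ)*I*z) else 0) := by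
    intro j
    by_cases hj : j = -1
    · subst hj
      unfold Rterm Rterm'
      rw [if_pos (by norm_num : (0:ℤ) ≤ (-1) + 1), if_neg (by norm_num : ¬ (0:ℤ) ≤ (-1:ℤ)),
        if_pos rfl]
      rw [show (-(π:ℝ) * I * T * (((-1:ℤ):ℂ) + 1 / 2) ^ 2 : ℂ) = -(π:ℂ)*I*T/4 by push_cast; ring,
        show (-2 * (π:ℝ) * I * (((-1:ℤ):ℂ) + 1 / 2) * z : ℂ) = (π:ℂ)*I*z by push_cast; ring,
        show ((-1:ℂ) ^ (-1:ℤ)) = -1 by norm_num]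
      push_cast
      ring
    · unfold Rterm Rterm'
      have h01 : (if (0:ℤ) ≤ j + 1 then (1:ℝ) else -1) = (if (0:ℤ) ≤ j then (1:ℝ) else -1) := by
        have : ((0:ℤ) ≤ j + 1) ↔ ((0:ℤ) ≤ j) := by omega
        simp [this]
      rw [h01, if_neg hj, add_zero]
  have step4 : (∑' j : ℤ, Rterm' z T j) = RFn z T +
      (-2) * Complex.exp (-(π:ℂ)*I*T/4) * Complex.exp ((π:ℂ)*I*z) := by
    rw [RFn_eq]
    calc (∑' j : ℤ, Rterm' z T j)
        = ∑' j : ℤ, (Rterm z T j +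
            (if j = -1 then (-2) * Complex.exp (-(π:ℂ)*I*T/4) * Complex.exp ((π:ℂ)*I*z) else 0)) :=
          tsum_congr step3
      _ = (∑' j : ℤ, Rterm z T j) + ∑' j : ℤ,
            (if j = -1 then (-2) * Complex.exp (-(π:ℂ)*I*T/4) * Complex.exp ((π:ℂ)*I*z) else 0) :=
          Summable.tsum_add hsum ((hasSum_ite_eq (-1 : ℤ) _).summable)
      _ = (∑' j : ℤ, Rterm z T j) +
            (-2) * Complex.exp (-(π:ℂ)*I*T/4) * Complex.exp ((π:ℂ)*I*z) := by
          rw [tsum_ite_eq]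
  rw [step2, step4, hc]
  ring
end Rpart
section Esec
open Real MeasureTheory Set

lemma gauss_integrable : MeasureTheory.Integrable (fun t : ℝ => Real.exp (-π * t^2)) :=
  integrable_exp_neg_mul_sq pi_pos

lemma gauss_Ioi_zero : ∫ t in Ioi (0:ℝ), Real.exp (-π * t^2) = 1/2 := by
  rw [integral_gaussian_Ioi, div_self (ne_of_gt pi_pos), Real.sqrt_one]

lemma Efun_tail (x : ℝ) (hx : 0 ≤ x) :
    1 - Efun x = 2 * ∫ t in Ioi x, Real.exp (-π * t^2) := by
  have h1 : Efun x = 2 * ∫ t in Ioc 0 x, Real.exp (-π*t^2) := by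
    rw [Efun, intervalIntegral.integral_of_le hx]
  have hdisj : Disjoint (Ioc (0:ℝ) x) (Ioi x) := by
    rw [Set.disjoint_left]
    rintro t ⟨_, h1⟩ h2
    exact absurd h1 (not_le.mpr h2)
  have hsplit : (∫ t in Ioi (0:ℝ), Real.exp (-π*t^2)) =
      (∫ t in Ioc 0 x, Real.exp (-π*t^2)) + ∫ t in Ioi x, Real.exp (-π*t^2) := by
    rw [← MeasureTheory.setIntegral_union hdisj measurableSet_Ioi
      gauss_integrable.integrableOn gauss_integrable.integrableOn,
      Set.Ioc_union_Ioi_eq_Ioi hx]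
  have := gauss_Ioi_zero
  rw [hsplit] at this
  rw [h1]
  linarith

lemma tail_nonneg (x : ℝ) : 0 ≤ ∫ t in Ioi x, Real.exp (-π * t^2) :=
  setIntegral_nonneg measurableSet_Ioi (fun t _ => (Real.exp_pos _).le)

lemma tail_le_half (x : ℝ) (hx : 0 ≤ x) :
    (∫ t in Ioi x, Real.exp (-π * t^2)) ≤ 1/2 := by
  rw [← gauss_Ioi_zero]
  apply MeasureTheory.setIntegral_mono_set gauss_integrable.integrableOn
    (Filter.Eventually.of_forall fun t => (Real.exp_pos _).le)
    (HasSubset.Subset.eventuallyLE (Set.Ioi_subset_Ioi hx))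

lemma one_sub_Efun_bound (x : ℝ) (hx : 0 ≤ x) :
    |1 - Efun x| ≤ Real.exp π * Real.exp (-(π * x^2)) := by
  rw [Efun_tail x hx]
  rw [_root_.abs_of_nonneg (show (0:ℝ) ≤ 2 * ∫ t in Ioi x, Real.exp (-π * t^2) by
    have := tail_nonneg x; linarith)]
  rcases le_or_gt x 1 with hx1 | hx1
  · have h1 : 2 * (∫ t in Ioi x, Real.exp (-π * t^2)) ≤ 1 := by
      have := tail_le_half x hx
      linarith
    have h2 : (1:ℝ) ≤ Real.exp π * Real.exp (-(π * x^2)) := by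
      rw [← Real.exp_add]
      have hx2 : x^2 ≤ 1 := by nlinarith
      have : (0:ℝ) ≤ π + -(π * x^2) := by
        nlinarith [mul_nonneg pi_pos.le (by nlinarith : (0:ℝ) ≤ 1 - x^2)]
      calc (1:ℝ) = Real.exp 0 := (Real.exp_zero).symm
        _ ≤ _ := Real.exp_le_exp.mpr this
    linarith
  · have hpt : ∀ t ∈ Ioi x, Real.exp (-π * t^2) ≤
        (Real.exp (-(π * x^2)) * Real.exp x) * Real.exp (-t) := by
      intro t ht
      rw [← Real.exp_add, ← Real.exp_add]
      apply Real.exp_le_exp.mpr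
      have ht' : x < t := ht
      have hpi : (1:ℝ) ≤ π := by nlinarith [pi_gt_three]
      have h1 : (0:ℝ) ≤ (t - x) * (t + x - 1) := mul_nonneg (by linarith) (by linarith)
      have h2 : (0:ℝ) ≤ (π - 1) * ((t - x) * (t + x)) :=
        mul_nonneg (by linarith) (mul_nonneg (by linarith) (by linarith))
      nlinarith [h1, h2]
    have hint : IntegrableOn (fun t : ℝ =>
        (Real.exp (-(π * x^2)) * Real.exp x) * Real.exp (-t)) (Ioi x) := by
      have h := (exp_neg_integrableOn_Ioi x (by norm_num : (0:ℝ) < 1))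
      simp only [neg_mul, one_mul] at h
      exact h.const_mul _
    have hmono : (∫ t in Ioi x, Real.exp (-π * t^2)) ≤
        ∫ t in Ioi x, (Real.exp (-(π * x^2)) * Real.exp x) * Real.exp (-t) := by
      apply MeasureTheory.setIntegral_mono_on gauss_integrable.integrableOn hint
        measurableSet_Ioi hpt
    have hval : (∫ t in Ioi x, (Real.exp (-(π * x^2)) * Real.exp x) * Real.exp (-t))
        = (Real.exp (-(π * x^2)) * Real.exp x) * Real.exp (-x) := by
      rw [MeasureTheory.integral_const_mul, integral_exp_neg_Ioi]
    have h2 : (2:ℝ) ≤ Real.exp π := by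
      have := Real.add_one_le_exp π
      nlinarith [pi_gt_three]
    have hxx : Real.exp x * Real.exp (-x) = 1 := by
      rw [← Real.exp_add]; simp
    have hexp_pos := Real.exp_pos (-(π * x^2))
    calc 2 * (∫ t in Ioi x, Real.exp (-π * t^2))
        ≤ 2 * ((Real.exp (-(π * x^2)) * Real.exp x) * Real.exp (-x)) := by linarith [hmono.trans (le_of_eq hval)]
      _ = 2 * Real.exp (-(π * x^2)) := by rw [mul_assoc (Real.exp (-(π * x^2))), hxx, mul_one]
      _ ≤ Real.exp π * Real.exp (-(π * x^2)) := by nlinarith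
  
lemma Efun_neg (x : ℝ) : Efun (-x) = -Efun x := by
  unfold Efun
  have h := intervalIntegral.integral_comp_neg (a := (0:ℝ)) (b := -x)
    (fun t => Real.exp (-π * t^2))
  simp only [neg_sq, neg_zero, neg_neg] at h
  rw [h, intervalIntegral.integral_symm 0 x]
  ring

lemma summable_geom_int {r : ℝ} (h0 : 0 ≤ r) (h1 : r < 1) :
    Summable (fun m : ℤ => r ^ m.natAbs) := by
  refine Summable.of_nat_of_neg ?_ ?_ <;> simpa using summable_geometric_of_lt_one h0 h1

lemma summable_of_locbound (f : ℤ → ℂ) (C r : ℝ) (h0 : 0 ≤ r) (h1 : r < 1) (K : ℤ)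
    (hb : ∀ m : ℤ, K < |m| → ‖f m‖ ≤ C * r ^ m.natAbs) : Summable f := by
  refine Summable.of_norm_bounded_eventually (g := fun m => C * r ^ m.natAbs)
    ((summable_geom_int h0 h1).mul_left C) ?_
  rw [Filter.eventually_cofinite]
  apply Set.Finite.subset (Set.finite_Icc (-K) K)
  intro m hm
  simp only [Set.mem_setOf_eq] at hm
  by_contra hmem
  simp only [Set.mem_Icc, not_and_or, not_le] at hmem
  have habs : K < |m| := by
    rcases abs_cases m with ⟨h, _⟩ | ⟨h, _⟩ <;> omega
  exact hm (hb m habs)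

lemma norm_exp_eq (w : ℂ) : ‖Complex.exp w‖ = Real.exp w.re := by
  rw [Complex.norm_exp]

lemma norm_exp_real_mul (r : ℝ) (w : ℂ) : ‖Complex.exp ((r:ℂ) * w)‖ = Real.exp (r * w.re) := by
  rw [norm_exp_eq, Complex.re_ofReal_mul]

end Esec
section S4
open Real

lemma neg_pi_I_mul_re (T : ℂ) : ((-(π:ℂ)) * I * T).re = π * T.im := by
  simp [Complex.mul_re, Complex.mul_im]

lemma norm_Rterm (z T : ℂ) (k : ℤ) :
    ‖Rterm z T k‖ = |((if (0:ℤ) ≤ k then (1:ℝ) else -1) -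
        Efun (((k : ℝ) + 1 / 2 + z.im / T.im) * Real.sqrt (2 * T.im)))| *
      (Real.exp ((((k:ℝ)+1/2)^2) * (π * T.im)) * Real.exp ((2*((k:ℝ)+1/2)) * (π * z.im))) := by
  unfold Rterm
  rw [norm_mul, norm_mul, norm_mul]
  rw [show (-(π:ℝ) * I * T * ((k:ℂ) + 1 / 2) ^ 2 : ℂ) =
      ((((k:ℝ)+1/2)^2 : ℝ) : ℂ) * ((-(π:ℂ)) * I * T) by push_cast; ring]
  rw [show (-2 * (π:ℝ) * I * ((k:ℂ) + 1 / 2) * z : ℂ) =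
      ((2*((k:ℝ)+1/2) : ℝ) : ℂ) * ((-(π:ℂ)) * I * z) by push_cast; ring]
  rw [norm_exp_real_mul, norm_exp_real_mul, neg_pi_I_mul_re, neg_pi_I_mul_re]
  rw [show ‖((-1:ℂ)) ^ k‖ = 1 by rw [norm_zpow]; simp]
  rw [Complex.norm_real, Real.norm_eq_abs]
  ring

lemma summable_Rterm (z T : ℂ) (hT : 0 < T.im) : Summable (Rterm z T) := by
  set s := T.im with hs
  set r := z.im / s with hr
  have hspos : 0 < s := hT
  apply summable_of_locbound _ (Real.exp π * Real.exp (π * s * (|r| + 1/2)))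
    (Real.exp (-(π*s))) (Real.exp_nonneg _)
    (Real.exp_lt_one_iff.mpr (by nlinarith [pi_pos]))
    (⌈|r|⌉ + 2)
  intro k hk
  rw [norm_Rterm]
  set u : ℝ := (k:ℝ) + 1/2 with hu
  have hceil : |r| ≤ ((⌈|r|⌉ : ℤ) : ℝ) := Int.le_ceil _
  have hknat : |(k:ℝ)| = (k.natAbs : ℝ) := by
    simp [Nat.cast_natAbs]
  have hkabs : |r| + 2 < |(k:ℝ)| := by
    have h2 : ((⌈|r|⌉ + 2 : ℤ) : ℝ) < ((|k| : ℤ) : ℝ) := by exact_mod_cast hk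
    rw [Int.cast_abs] at h2
    push_cast at h2
    linarith
  have habs1 : |(k:ℝ)| - 1/2 - |r| ≤ |u + r| := by
    have h1 : |(k:ℝ)| ≤ |u + r| + (1/2 + |r|) := by
      have : (k:ℝ) = (u + r) - (1/2 + r) := by rw [hu]; ring
      rw [this]
      calc |(u + r) - (1/2 + r)| ≤ |u + r| + |1/2 + r| := abs_sub _ _
        _ ≤ |u + r| + (1/2 + |r|) := by
            have : |1/2 + r| ≤ |(1/2 : ℝ)| + |r| := abs_add_le _ _
            rw [abs_of_pos (by norm_num : (0:ℝ) < 1/2)] at this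
            linarith
    linarith
  have habs32 : (3/2 : ℝ) ≤ |u + r| := by linarith
  have hsq : |u + r| ≤ (u + r)^2 := by
    have h0 : 0 ≤ |u + r| := abs_nonneg _
    have := mul_le_mul_of_nonneg_left habs32 h0
    calc |u + r| = 1 * |u + r| := (one_mul _).symm
      _ ≤ |u + r| * |u + r| := by nlinarith
      _ = (u + r)^2 := by rw [abs_mul_abs_self]; ring
  -- coefficient bound
  set x : ℝ := (u + r) * Real.sqrt (2 * s) with hx
  have hxsq : x^2 = (u + r)^2 * (2 * s) := by
    rw [hx, mul_pow, Real.sq_sqrt (by linarith : (0:ℝ) ≤ 2 * s)]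
  have hcoef : |(if (0:ℤ) ≤ k then (1:ℝ) else -1) - Efun x| ≤
      Real.exp π * Real.exp (-(π * x^2)) := by
    by_cases hk0 : (0:ℤ) ≤ k
    · rw [if_pos hk0]
      have hk0' : (0:ℝ) ≤ (k:ℝ) := by exact_mod_cast hk0
      have hur : 0 ≤ u + r := by
        rw [_root_.abs_of_nonneg hk0'] at hkabs
        rw [hu]
        have : -|r| ≤ r := neg_abs_le r
        linarith
      exact one_sub_Efun_bound x (mul_nonneg hur (Real.sqrt_nonneg _))
    · rw [if_neg hk0]
      push_neg at hk0
      have hk0' : (k:ℝ) < 0 := by exact_mod_cast hk0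
      have hur : u + r ≤ 0 := by
        rw [_root_.abs_of_neg hk0'] at hkabs
        rw [hu]
        have : r ≤ |r| := le_abs_self r
        linarith
      have hxneg : x ≤ 0 := mul_nonpos_of_nonpos_of_nonneg hur (Real.sqrt_nonneg _)
      have heq : (-1 : ℝ) - Efun x = -(1 - Efun (-x)) := by
        rw [Efun_neg]; ring
      rw [heq, abs_neg]
      have := one_sub_Efun_bound (-x) (by linarith)
      rw [neg_sq] at this
      exact this
  -- exponent bound
  have hzim : z.im = r * s := by rw [hr]; field_simp
  have hexpbound : Real.exp (u^2 * (π * s)) * Real.exp ((2*u) * (π * z.im)) *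
      Real.exp (-(π * x^2)) ≤
      Real.exp (π * s * (|r| + 1/2)) * Real.exp (-(π*s)) ^ k.natAbs := by
    rw [← Real.exp_add, ← Real.exp_add, ← Real.exp_nat_mul, ← Real.exp_add]
    apply Real.exp_le_exp.mpr
    rw [hxsq, hzim]
    have hnat : (k.natAbs : ℝ) ≤ (u + r)^2 + r^2 + (|r| + 1/2) := by
      have : (k.natAbs : ℝ) = |(k:ℝ)| := hknat.symm
      rw [this]
      have hr2 : (0:ℝ) ≤ r^2 := sq_nonneg r
      linarith [habs1.trans hsq]
    have key : u^2 * (π * s) + 2*u*(π*(r*s)) + -(π*((u+r)^2*(2*s))) =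
        π * s * (-( (u+r)^2 + r^2)) := by ring
    calc u^2 * (π * s) + 2*u*(π*(r*s)) + -(π*((u+r)^2*(2*s)))
        = π * s * (-((u+r)^2 + r^2)) := key
      _ ≤ π * s * (|r| + 1/2) + (k.natAbs : ℝ) * -(π*s) := by nlinarith [mul_pos pi_pos hspos]
  calc |(if (0:ℤ) ≤ k then (1:ℝ) else -1) - Efun x| *
        (Real.exp (u^2 * (π * s)) * Real.exp ((2*u) * (π * z.im)))
      ≤ (Real.exp π * Real.exp (-(π * x^2))) *
        (Real.exp (u^2 * (π * s)) * Real.exp ((2*u) * (π * z.im))) := by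
        apply mul_le_mul_of_nonneg_right hcoef (by positivity)
    _ = Real.exp π * (Real.exp (u^2 * (π * s)) * Real.exp ((2*u) * (π * z.im)) *
          Real.exp (-(π * x^2))) := by ring
    _ ≤ Real.exp π * (Real.exp (π * s * (|r| + 1/2)) * Real.exp (-(π*s)) ^ k.natAbs) := by
        apply mul_le_mul_of_nonneg_left hexpbound (Real.exp_nonneg _)
    _ = Real.exp π * Real.exp (π * s * (|r| + 1/2)) * Real.exp (-(π*s)) ^ k.natAbs := by ring

end S4
section S1
open Real

/-- Summand of the Appell sum. -/
def Aterm (ℓ : ℕ) (u v τ : ℂ) (m : ℤ) : ℂ :=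
  (-1 : ℂ) ^ ((ℓ : ℤ) * m) * Complex.exp (Real.pi * I * τ * ℓ * m * (m + 1)) *
      Complex.exp (2 * Real.pi * I * m * v) /
        (1 - Complex.exp (2 * Real.pi * I * u) * Complex.exp (2 * Real.pi * I * τ) ^ m)

/-- Numerator of the Appell summand. -/
def Nterm (ℓ : ℕ) (v τ : ℂ) (m : ℤ) : ℂ :=
  (-1 : ℂ) ^ ((ℓ : ℤ) * m) * Complex.exp (Real.pi * I * τ * ℓ * m * (m + 1)) *
      Complex.exp (2 * Real.pi * I * m * v)

lemma appell_eq (ℓ : ℕ) (u v τ : ℂ) :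
    appell ℓ u v τ = Complex.exp ((π:ℝ) * I * ℓ * u) * ∑' m : ℤ, Aterm ℓ u v τ m := rfl

lemma negOnePowTwoMul (N : ℕ) (m : ℤ) : (-1 : ℂ) ^ (((2*N : ℕ) : ℤ) * m) = 1 :=
  Even.neg_one_zpow ⟨(N:ℤ)*m, by push_cast; ring⟩

lemma Nterm_eq (N : ℕ) (v τ : ℂ) (m : ℤ) :
    Nterm (2*N) v τ m = jacobiTheta₂_term m (v + (N:ℂ)*τ) (((2*N : ℕ):ℂ)*τ) := by
  unfold Nterm jacobiTheta₂_term
  rw [negOnePowTwoMul, one_mul, ← Complex.exp_add]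
  congr 1
  push_cast
  ring

lemma nat_mul_im (n : ℕ) (τ : ℂ) : (((n:ℕ):ℂ)*τ).im = n * τ.im := by
  simp [Complex.mul_im]

lemma summable_Nterm (N : ℕ) (hN : 1 ≤ N) (v τ : ℂ) (hτ : 0 < τ.im) :
    Summable (Nterm (2*N) v τ) := by
  have him : 0 < ((((2*N : ℕ):ℂ))*τ).im := by
    rw [nat_mul_im]
    have : (0:ℝ) < (2*N : ℕ) := by positivity
    positivity
  have h := (summable_jacobiTheta₂_term_iff (v + (N:ℂ)*τ) (((2*N : ℕ):ℂ)*τ)).mpr him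
  exact h.congr (fun m => (Nterm_eq N v τ m).symm)

lemma tsum_Nterm_eq (N : ℕ) (v τ : ℂ) :
    (∑' m : ℤ, Nterm (2*N) v τ m) = jacobiTheta₂ (v + (N:ℂ)*τ) (((2*N : ℕ):ℂ)*τ) :=
  tsum_congr (Nterm_eq N v τ)

lemma norm_Nterm (ℓ : ℕ) (v τ : ℂ) (m : ℤ) :
    ‖Nterm ℓ v τ m‖ =
      Real.exp ((π * ℓ * ((m:ℝ)^2 + m)) * (-τ.im)) * Real.exp ((2*π*m) * (-v.im)) := by
  unfold Nterm
  rw [norm_mul, norm_mul]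
  rw [show ((π:ℝ) * I * τ * ℓ * m * (m + 1) : ℂ) =
      ((π * ℓ * ((m:ℝ)^2 + m) : ℝ) : ℂ) * (I * τ) by push_cast; ring]
  rw [show ((2:ℂ) * (π:ℝ) * I * m * v : ℂ) = ((2*π*(m:ℝ) : ℝ) : ℂ) * (I * v) by push_cast; ring]
  rw [norm_exp_real_mul, norm_exp_real_mul]
  rw [show ‖((-1:ℂ)) ^ ((ℓ:ℤ) * m)‖ = 1 by rw [norm_zpow]; simp]
  rw [Complex.I_mul_re, Complex.I_mul_re]
  ring

lemma norm_denom_term (u τ : ℂ) (m : ℤ) :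
    ‖Complex.exp (2 * (π:ℝ) * I * u) * Complex.exp (2 * (π:ℝ) * I * τ) ^ m‖ =
      Real.exp (-(2*π*u.im) + (m:ℝ) * (-(2*π*τ.im))) := by
  rw [← Complex.exp_int_mul, ← Complex.exp_add, norm_exp_eq]
  congr 1
  rw [show ((2:ℂ) * (π:ℝ) * I * u + (m:ℂ) * (2 * (π:ℝ) * I * τ)) =
      ((2*π:ℝ):ℂ) * (I * u) + (((m:ℝ)*(2*π) : ℝ):ℂ) * (I * τ) by push_cast; ring]
  rw [Complex.add_re, Complex.re_ofReal_mul, Complex.re_ofReal_mul, Complex.I_mul_re,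
    Complex.I_mul_re]
  ring

lemma summable_Aterm (ℓ : ℕ) (hl : 1 ≤ ℓ) (u v τ : ℂ) (hτ : 0 < τ.im) :
    Summable (Aterm ℓ u v τ) := by
  set s := τ.im with hs
  set K₁ : ℤ := ⌈(Real.log 2 / (2*π) + |u.im|) / s⌉ + 1 with hK₁
  set K₂ : ℤ := ⌈(2*|v.im|)/s⌉ + 2 with hK₂
  apply summable_of_locbound _ 2 (Real.exp (-(π*s))) (Real.exp_nonneg _)
    (Real.exp_lt_one_iff.mpr (by nlinarith [pi_pos])) (max K₁ K₂)
  intro m hm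
  have hknat : |(m:ℝ)| = (m.natAbs : ℝ) := by simp [Nat.cast_natAbs]
  have hm1 : (K₁ : ℝ) < |(m:ℝ)| := by
    have : ((K₁ : ℤ) : ℝ) ≤ ((max K₁ K₂ : ℤ) : ℝ) := by exact_mod_cast le_max_left K₁ K₂
    have h2 : ((max K₁ K₂ : ℤ) : ℝ) < ((|m| : ℤ) : ℝ) := by exact_mod_cast hm
    rw [Int.cast_abs] at h2
    linarith
  have hm2 : (K₂ : ℝ) < |(m:ℝ)| := by
    have : ((K₂ : ℤ) : ℝ) ≤ ((max K₁ K₂ : ℤ) : ℝ) := by exact_mod_cast le_max_right K₁ K₂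
    have h2 : ((max K₁ K₂ : ℤ) : ℝ) < ((|m| : ℤ) : ℝ) := by exact_mod_cast hm
    rw [Int.cast_abs] at h2
    linarith
  have hceil1 : (Real.log 2 / (2*π) + |u.im|) / s ≤ ((⌈(Real.log 2 / (2*π) + |u.im|) / s⌉ : ℤ) : ℝ) :=
    Int.le_ceil _
  have hceil2 : (2*|v.im|)/s ≤ ((⌈(2*|v.im|)/s⌉ : ℤ) : ℝ) := Int.le_ceil _
  have hK₁' : Real.log 2 / (2*π) + |u.im| ≤ s * ((K₁:ℝ) - 1) := by
    rw [hK₁]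
    push_cast
    have := (div_le_iff₀ hτ).mp hceil1
    nlinarith
  -- denominator bound
  have hden : (1/2 : ℝ) ≤ ‖1 - Complex.exp (2 * (π:ℝ) * I * u) * Complex.exp (2 * (π:ℝ) * I * τ) ^ m‖ := by
    rcases le_or_gt 0 m with hm0 | hm0
    · -- m large positive : ‖ζ q^m‖ ≤ 1/2
      have hmK : (K₁:ℝ) ≤ (m:ℝ) := by
        rw [_root_.abs_of_nonneg (by exact_mod_cast hm0 : (0:ℝ) ≤ (m:ℝ))] at hm1
        linarith
      have hval : ‖Complex.exp (2 * (π:ℝ) * I * u) * Complex.exp (2 * (π:ℝ) * I * τ) ^ m‖ ≤ 1/2 := by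
        rw [norm_denom_term]
        have harg : -(2*π*u.im) + (m:ℝ)*(-(2*π*s)) ≤ -Real.log 2 := by
          have hπ : (0:ℝ) < 2*π := by positivity
          have h1 : Real.log 2 / (2*π) + |u.im| ≤ s * (m:ℝ) := by
            have : s * ((K₁:ℝ) - 1) ≤ s * (m:ℝ) := by nlinarith
            linarith
          have h2 : -u.im ≤ |u.im| := neg_le_abs _
          have h3 := mul_le_mul_of_nonneg_left h1 (le_of_lt hπ)
          have hlog : 2*π*(Real.log 2/(2*π)) = Real.log 2 := by field_simp
          nlinarith [h3, h2, hlog]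
        calc Real.exp (-(2*π*u.im) + (m:ℝ)*(-(2*π*s))) ≤ Real.exp (-Real.log 2) :=
              Real.exp_le_exp.mpr harg
          _ = 1/2 := by rw [Real.exp_neg, Real.exp_log (by norm_num : (0:ℝ) < 2)]; norm_num
      calc (1/2 : ℝ) = 1 - 1/2 := by norm_num
        _ ≤ 1 - ‖Complex.exp (2 * (π:ℝ) * I * u) * Complex.exp (2 * (π:ℝ) * I * τ) ^ m‖ := by
            linarith
        _ = ‖(1:ℂ)‖ - ‖Complex.exp (2 * (π:ℝ) * I * u) * Complex.exp (2 * (π:ℝ) * I * τ) ^ m‖ := by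
            rw [norm_one]
        _ ≤ ‖1 - Complex.exp (2 * (π:ℝ) * I * u) * Complex.exp (2 * (π:ℝ) * I * τ) ^ m‖ :=
            norm_sub_norm_le _ _
    · -- m large negative : ‖ζ q^m‖ ≥ 2
      have hmK : (K₁:ℝ) ≤ -(m:ℝ) := by
        rw [_root_.abs_of_neg (by exact_mod_cast hm0 : ((m:ℝ) < 0))] at hm1
        linarith
      have hval : (2:ℝ) ≤ ‖Complex.exp (2 * (π:ℝ) * I * u) * Complex.exp (2 * (π:ℝ) * I * τ) ^ m‖ := by
        rw [norm_denom_term]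
        have harg : Real.log 2 ≤ -(2*π*u.im) + (m:ℝ)*(-(2*π*s)) := by
          have hπ : (0:ℝ) < 2*π := by positivity
          have h1 : Real.log 2 / (2*π) + |u.im| ≤ s * (-(m:ℝ)) := by
            have : s * ((K₁:ℝ) - 1) ≤ s * (-(m:ℝ)) := by nlinarith
            linarith
          have h2 : u.im ≤ |u.im| := le_abs_self _
          have h3 := mul_le_mul_of_nonneg_left h1 (le_of_lt hπ)
          have hlog : 2*π*(Real.log 2/(2*π)) = Real.log 2 := by field_simp
          nlinarith [h3, h2, hlog]
        calc (2:ℝ) = Real.exp (Real.log 2) := (Real.exp_log (by norm_num)).symm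
          _ ≤ _ := Real.exp_le_exp.mpr harg
      calc (1/2 : ℝ) ≤ ‖Complex.exp (2 * (π:ℝ) * I * u) * Complex.exp (2 * (π:ℝ) * I * τ) ^ m‖ - 1 := by
            linarith
        _ = ‖Complex.exp (2 * (π:ℝ) * I * u) * Complex.exp (2 * (π:ℝ) * I * τ) ^ m‖ - ‖(1:ℂ)‖ := by
            rw [norm_one]
        _ ≤ ‖Complex.exp (2 * (π:ℝ) * I * u) * Complex.exp (2 * (π:ℝ) * I * τ) ^ m - 1‖ :=
            norm_sub_norm_le _ _
        _ = ‖1 - Complex.exp (2 * (π:ℝ) * I * u) * Complex.exp (2 * (π:ℝ) * I * τ) ^ m‖ := by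
            rw [← norm_neg]; congr 1; ring
  -- numerator bound
  have hnum : ‖Nterm ℓ v τ m‖ ≤ Real.exp (-(π*s)) ^ m.natAbs := by
    rw [norm_Nterm, ← Real.exp_nat_mul, ← Real.exp_add]
    apply Real.exp_le_exp.mpr
    have hsq : |(m:ℝ)| * (|(m:ℝ)| - 1) ≤ (m:ℝ)^2 + m := by
      rcases abs_cases (m:ℝ) with ⟨h, h0⟩ | ⟨h, h0⟩ <;> nlinarith
    have hmabs : (2*|v.im|)/s + 2 < |(m:ℝ)| := by
      have : ((⌈(2*|v.im|)/s⌉ : ℤ) : ℝ) + 2 ≤ (K₂ : ℝ) := by rw [hK₂]; push_cast; linarith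
      linarith
    have hvim : -((m:ℝ)) * v.im ≤ |(m:ℝ)| * |v.im| := by
      calc -((m:ℝ)) * v.im ≤ |(-((m:ℝ))) * v.im| := le_abs_self _
        _ = |(m:ℝ)| * |v.im| := by rw [abs_mul, abs_neg]
    have hl' : (1:ℝ) ≤ (ℓ:ℝ) := by exact_mod_cast hl
    have habs0 : (0:ℝ) ≤ |(m:ℝ)| := abs_nonneg _
    have hv0 : (0:ℝ) ≤ 2*|v.im|/s := by positivity
    have hmge : (2:ℝ) ≤ |(m:ℝ)| := by linarith
    have hs2 : (2*|v.im|) ≤ s * (|(m:ℝ)| - 2) := by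
      have h := (div_lt_iff₀ hτ).mp (by linarith : (2*|v.im|)/s < |(m:ℝ)| - 2)
      linarith only [h]
    rw [← hknat]
    have hmm0 : (0:ℝ) ≤ |(m:ℝ)| * (|(m:ℝ)| - 1) := by nlinarith
    have hmm : (0:ℝ) ≤ (m:ℝ)^2 + m := le_trans hmm0 hsq
    have key : π * ℓ * ((m:ℝ)^2 + (m:ℝ)) * (-s) + (2*π*(m:ℝ)) * (-v.im) ≤
        |(m:ℝ)| * (-(π * s)) := by
      have h1 : π * ℓ * ((m:ℝ)^2 + (m:ℝ)) * (-s) ≤ π * (|(m:ℝ)| * (|(m:ℝ)| - 1)) * (-s) := by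
        have hh : |(m:ℝ)| * (|(m:ℝ)| - 1) ≤ (ℓ:ℝ) * ((m:ℝ)^2 + m) := by
          have hprod : (0:ℝ) ≤ ((ℓ:ℝ) - 1) * ((m:ℝ)^2 + m) :=
            mul_nonneg (by linarith) hmm
          nlinarith [hsq, hprod]
        have := mul_le_mul_of_nonneg_left hh (mul_pos pi_pos hτ).le
        nlinarith [this]
      have h2 : (2*π*(m:ℝ)) * (-v.im) ≤ 2*π*(|(m:ℝ)| * |v.im|) := by
        have := mul_le_mul_of_nonneg_left hvim (by positivity : (0:ℝ) ≤ 2*π)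
        nlinarith [this]
      have h3 : π * (|(m:ℝ)| * (|(m:ℝ)| - 1)) * (-s) + 2*π*(|(m:ℝ)| * |v.im|) ≤
          |(m:ℝ)| * (-(π * s)) := by
        have expand : |(m:ℝ)| * (-(π * s)) - (π * (|(m:ℝ)| * (|(m:ℝ)| - 1)) * (-s) +
            2*π*(|(m:ℝ)| * |v.im|)) = π * |(m:ℝ)| * (s * (|(m:ℝ)| - 2) - 2*|v.im|) := by ring
        have hpos : (0:ℝ) ≤ π * |(m:ℝ)| * (s * (|(m:ℝ)| - 2) - 2*|v.im|) :=
          mul_nonneg (mul_nonneg pi_pos.le habs0) (by linarith)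
        linarith [expand, hpos]
      linarith
    linarith [key]
  -- combine
  have hATN : Aterm ℓ u v τ m = Nterm ℓ v τ m /
      (1 - Complex.exp (2 * (π:ℝ) * I * u) * Complex.exp (2 * (π:ℝ) * I * τ) ^ m) := rfl
  rw [hATN, norm_div]
  rw [div_le_iff₀ (by linarith : (0:ℝ) <
    ‖1 - Complex.exp (2 * (π:ℝ) * I * u) * Complex.exp (2 * (π:ℝ) * I * τ) ^ m‖)]
  calc ‖Nterm ℓ v τ m‖ ≤ Real.exp (-(π*s)) ^ m.natAbs := hnum
    _ = (2 * Real.exp (-(π*s)) ^ m.natAbs) * (1/2) := by ring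
    _ ≤ (2 * Real.exp (-(π*s)) ^ m.natAbs) *
        ‖1 - Complex.exp (2 * (π:ℝ) * I * u) * Complex.exp (2 * (π:ℝ) * I * τ) ^ m‖ := by
        apply mul_le_mul_of_nonneg_left hden (by positivity)

end S1
section Steps
open Real

/-- Summand of the theta-R correction. -/
def Gterm (ℓ : ℕ) (u v τ : ℂ) (k : ℕ) : ℂ :=
  Complex.exp (2 * Real.pi * I * k * u) *
    thetaFn (v + k * τ + ((ℓ : ℂ) - 1) / 2) (ℓ * τ) *
      RFn ((ℓ : ℂ) * u - v - k * τ - ((ℓ : ℂ) - 1) / 2) (ℓ * τ)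

lemma appellHat_eq (ℓ : ℕ) (u v τ : ℂ) :
    appellHat ℓ u v τ = appell ℓ u v τ +
      (I / 2) * ∑ k ∈ Finset.range ℓ, Gterm ℓ u v τ k := rfl

lemma exp_one_int (j : ℤ) : Complex.exp ((j:ℂ) * (2*(π:ℂ)*I)) = 1 := by
  have := exp_eq_of_diff_int (A := (j:ℂ) * (2*(π:ℂ)*I)) (B := 0) j (by ring)
  rwa [Complex.exp_zero] at this

lemma hatL1 (N : ℕ) (τ u v : ℂ) (b : ℤ) :
    appellHat (2*N) (u + (b:ℂ)) v τ = appellHat (2*N) u v τ := by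
  rw [appellHat_eq, appellHat_eq, appell_eq, appell_eq]
  congr 1
  · congr 1
    · exact exp_eq_of_diff_int ((N:ℤ)*b) (by push_cast; ring)
    · refine tsum_congr fun m => ?_
      unfold Aterm
      congr 3
      exact exp_eq_of_diff_int b (by push_cast; ring)
  · congr 1
    refine Finset.sum_congr rfl fun k _ => ?_
    unfold Gterm
    have h1 : Complex.exp (2 * (π:ℝ) * I * (k:ℕ) * (u + (b:ℂ))) =
        Complex.exp (2 * (π:ℝ) * I * (k:ℕ) * u) :=
      exp_eq_of_diff_int ((k:ℤ)*b) (by push_cast; ring)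
    have h2 : ((2*N:ℕ) : ℂ) * (u + (b:ℂ)) - v - (k:ℕ) * τ - (((2*N:ℕ) : ℂ) - 1) / 2 =
        (((2*N:ℕ) : ℂ) * u - v - (k:ℕ) * τ - (((2*N:ℕ) : ℂ) - 1) / 2) + (((2*N:ℤ)*b : ℤ) : ℂ) := by
      push_cast; ring
    rw [h1, h2, RFn_add_int]
    have h3 : Complex.exp ((((2*N:ℤ)*b : ℤ) : ℂ) * (π:ℝ) * I) = 1 := by
      have := exp_eq_of_diff_int (A := (((2*N:ℤ)*b : ℤ) : ℂ) * (π:ℝ) * I) (B := 0)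
        ((N:ℤ)*b) (by push_cast; ring)
      rwa [Complex.exp_zero] at this
    rw [h3]
    ring

lemma hatL2 (N : ℕ) (τ u v : ℂ) (d : ℤ) :
    appellHat (2*N) u (v + (d:ℂ)) τ = appellHat (2*N) u v τ := by
  rw [appellHat_eq, appellHat_eq, appell_eq, appell_eq]
  congr 1
  · congr 1
    refine tsum_congr fun m => ?_
    unfold Aterm
    congr 2
    exact exp_eq_of_diff_int (m*d) (by push_cast; ring)
  · congr 1
    refine Finset.sum_congr rfl fun k _ => ?_
    unfold Gterm
    have h1 : v + (d:ℂ) + (k:ℕ) * τ + (((2*N:ℕ) : ℂ) - 1) / 2 =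
        (v + (k:ℕ) * τ + (((2*N:ℕ) : ℂ) - 1) / 2) + ((d:ℤ):ℂ) := by push_cast; ring
    have h2 : ((2*N:ℕ) : ℂ) * u - (v + (d:ℂ)) - (k:ℕ) * τ - (((2*N:ℕ) : ℂ) - 1) / 2 =
        (((2*N:ℕ) : ℂ) * u - v - (k:ℕ) * τ - (((2*N:ℕ) : ℂ) - 1) / 2) + (((-d) : ℤ) : ℂ) := by
      push_cast; ring
    rw [h1, h2, RFn_add_int, thetaFn_add_int]
    have h3 : Complex.exp (((d:ℤ):ℂ) * (π:ℝ) * I) * Complex.exp ((((-d):ℤ):ℂ) * (π:ℝ) * I) = 1 := by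
      rw [← Complex.exp_add]
      have := exp_eq_of_diff_int
        (A := ((d:ℤ):ℂ) * (π:ℝ) * I + (((-d):ℤ):ℂ) * (π:ℝ) * I) (B := 0) 0 (by push_cast; ring)
      rwa [Complex.exp_zero] at this
    calc Complex.exp (2 * (π:ℝ) * I * (k:ℕ) * u) *
          (Complex.exp (((d:ℤ):ℂ) * (π:ℝ) * I) * thetaFn (v + (k:ℕ) * τ + (((2*N:ℕ) : ℂ) - 1) / 2) ((2*N:ℕ) * τ)) *
          (Complex.exp ((((-d):ℤ):ℂ) * (π:ℝ) * I) * RFn (((2*N:ℕ) : ℂ) * u - v - (k:ℕ) * τ - (((2*N:ℕ) : ℂ) - 1) / 2) ((2*N:ℕ) * τ))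
        = (Complex.exp (((d:ℤ):ℂ) * (π:ℝ) * I) * Complex.exp ((((-d):ℤ):ℂ) * (π:ℝ) * I)) *
          (Complex.exp (2 * (π:ℝ) * I * (k:ℕ) * u) *
            thetaFn (v + (k:ℕ) * τ + (((2*N:ℕ) : ℂ) - 1) / 2) ((2*N:ℕ) * τ) *
            RFn (((2*N:ℕ) : ℂ) * u - v - (k:ℕ) * τ - (((2*N:ℕ) : ℂ) - 1) / 2) ((2*N:ℕ) * τ)) := by ring
      _ = _ := by rw [h3, one_mul]
end Steps
section L3sec
open Real

lemma exp_shift (A B : ℂ) (m : ℤ) (h : A = B + (2*(m:ℂ)+1) * ((π:ℂ)*I)) :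
    Complex.exp A = -Complex.exp B := by
  have h2 : A = (B + (π:ℂ)*I) + (m:ℂ)*(2*(π:ℂ)*I) := by rw [h]; ring
  rw [exp_eq_of_diff_int m h2, exp_add_pi_I]

lemma hatL3 (N : ℕ) (τ u v : ℂ) :
    appellHat (2*N) (u + τ) (v + ((2*N:ℕ):ℂ) * τ) τ =
      Complex.exp (-(2*(π:ℂ)*I*(v + (N:ℂ)*τ))) * appellHat (2*N) u v τ := by
  rw [appellHat_eq, appellHat_eq, appell_eq, appell_eq]
  set C0 : ℂ := Complex.exp (-(2*(π:ℂ)*I*τ*((2*N:ℕ):ℂ)) - 2*(π:ℂ)*I*v) with hC0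
  have hterm : ∀ m : ℤ, Aterm (2*N) (u + τ) (v + ((2*N:ℕ):ℂ) * τ) τ m =
      C0 * Aterm (2*N) u v τ (m+1) := by
    intro m
    unfold Aterm
    have hden : Complex.exp (2 * (π:ℝ) * I * (u + τ)) * Complex.exp (2 * (π:ℝ) * I * τ) ^ m =
        Complex.exp (2 * (π:ℝ) * I * u) * Complex.exp (2 * (π:ℝ) * I * τ) ^ (m+1) := by
      rw [← Complex.exp_int_mul, ← Complex.exp_int_mul, ← Complex.exp_add, ← Complex.exp_add]
      congr 1
      push_cast
      ring
    rw [hden, negOnePowTwoMul, negOnePowTwoMul, one_mul, one_mul, ← mul_div_assoc]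
    congr 1
    rw [hC0, ← Complex.exp_add, ← Complex.exp_add, ← Complex.exp_add]
    congr 1
    push_cast
    ring
  have hre : (∑' m : ℤ, Aterm (2*N) u v τ (m+1)) = ∑' m : ℤ, Aterm (2*N) u v τ m := by
    have := (Equiv.addRight (1:ℤ)).tsum_eq (Aterm (2*N) u v τ)
    simpa using this
  have hApart : Complex.exp ((π:ℝ) * I * ((2*N:ℕ):ℂ) * (u + τ)) *
      ∑' m : ℤ, Aterm (2*N) (u + τ) (v + ((2*N:ℕ):ℂ) * τ) τ m =
      Complex.exp (-(2*(π:ℂ)*I*(v + (N:ℂ)*τ))) *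
        (Complex.exp ((π:ℝ) * I * ((2*N:ℕ):ℂ) * u) * ∑' m : ℤ, Aterm (2*N) u v τ m) := by
    have hsum : (∑' m : ℤ, Aterm (2*N) (u + τ) (v + ((2*N:ℕ):ℂ) * τ) τ m) =
        C0 * ∑' m : ℤ, Aterm (2*N) u v τ m := by
      calc (∑' m : ℤ, Aterm (2*N) (u + τ) (v + ((2*N:ℕ):ℂ) * τ) τ m)
          = ∑' m : ℤ, C0 * Aterm (2*N) u v τ (m+1) := tsum_congr hterm
        _ = C0 * ∑' m : ℤ, Aterm (2*N) u v τ (m+1) := tsum_mul_left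
        _ = C0 * ∑' m : ℤ, Aterm (2*N) u v τ m := by rw [hre]
    rw [hsum]
    have hpre : Complex.exp ((π:ℝ) * I * ((2*N:ℕ):ℂ) * (u + τ)) * C0 =
        Complex.exp (-(2*(π:ℂ)*I*(v + (N:ℂ)*τ))) * Complex.exp ((π:ℝ) * I * ((2*N:ℕ):ℂ) * u) := by
      rw [hC0, ← Complex.exp_add, ← Complex.exp_add]
      congr 1
      push_cast
      ring
    calc Complex.exp ((π:ℝ) * I * ((2*N:ℕ):ℂ) * (u + τ)) * (C0 * ∑' m : ℤ, Aterm (2*N) u v τ m)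
        = (Complex.exp ((π:ℝ) * I * ((2*N:ℕ):ℂ) * (u + τ)) * C0) * ∑' m : ℤ, Aterm (2*N) u v τ m := by
          ring
      _ = _ := by rw [hpre]; ring
  have hGpart : ∀ k ∈ Finset.range (2*N), Gterm (2*N) (u + τ) (v + ((2*N:ℕ):ℂ) * τ) τ k =
      Complex.exp (-(2*(π:ℂ)*I*(v + (N:ℂ)*τ))) * Gterm (2*N) u v τ k := by
    intro k _
    unfold Gterm
    rw [show v + ((2*N:ℕ):ℂ)*τ + ((k:ℕ):ℂ)*τ + (((2*N:ℕ):ℂ) - 1)/2 =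
        (v + ((k:ℕ):ℂ)*τ + (((2*N:ℕ):ℂ) - 1)/2) + ((2*N:ℕ):ℂ)*τ by ring]
    rw [thetaFn_add_T]
    rw [show ((2*N:ℕ):ℂ)*(u+τ) - (v + ((2*N:ℕ):ℂ)*τ) - ((k:ℕ):ℂ)*τ - (((2*N:ℕ):ℂ) - 1)/2 =
        ((2*N:ℕ):ℂ)*u - v - ((k:ℕ):ℂ)*τ - (((2*N:ℕ):ℂ) - 1)/2 by ring]
    have h5 : Complex.exp ((2*(π:ℝ)*I*((k:ℕ):ℂ)*(u+τ)) + ((-(π:ℂ)*I*(((2*N:ℕ):ℂ)*τ)) +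
        (-2*(π:ℂ)*I*(v + ((k:ℕ):ℂ)*τ + (((2*N:ℕ):ℂ) - 1)/2)))) =
        -Complex.exp ((-(2*(π:ℂ)*I*(v + (N:ℂ)*τ))) + 2*(π:ℝ)*I*((k:ℕ):ℂ)*u) :=
      exp_shift _ _ (-(N:ℤ)) (by push_cast; ring)
    have hkey : Complex.exp (2*(π:ℝ)*I*((k:ℕ):ℂ)*(u+τ)) *
        -(Complex.exp (-(π:ℂ)*I*(((2*N:ℕ):ℂ)*τ)) *
          Complex.exp (-2*(π:ℂ)*I*(v + ((k:ℕ):ℂ)*τ + (((2*N:ℕ):ℂ) - 1)/2))) =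
        Complex.exp (-(2*(π:ℂ)*I*(v + (N:ℂ)*τ))) * Complex.exp (2*(π:ℝ)*I*((k:ℕ):ℂ)*u) := by
      calc Complex.exp (2*(π:ℝ)*I*((k:ℕ):ℂ)*(u+τ)) *
          -(Complex.exp (-(π:ℂ)*I*(((2*N:ℕ):ℂ)*τ)) *
            Complex.exp (-2*(π:ℂ)*I*(v + ((k:ℕ):ℂ)*τ + (((2*N:ℕ):ℂ) - 1)/2)))
          = -(Complex.exp (2*(π:ℝ)*I*((k:ℕ):ℂ)*(u+τ)) *
            (Complex.exp (-(π:ℂ)*I*(((2*N:ℕ):ℂ)*τ)) *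
              Complex.exp (-2*(π:ℂ)*I*(v + ((k:ℕ):ℂ)*τ + (((2*N:ℕ):ℂ) - 1)/2)))) := by ring
        _ = -(Complex.exp ((2*(π:ℝ)*I*((k:ℕ):ℂ)*(u+τ)) + ((-(π:ℂ)*I*(((2*N:ℕ):ℂ)*τ)) +
            (-2*(π:ℂ)*I*(v + ((k:ℕ):ℂ)*τ + (((2*N:ℕ):ℂ) - 1)/2))))) := by
            rw [← Complex.exp_add, ← Complex.exp_add]
        _ = -(-Complex.exp ((-(2*(π:ℂ)*I*(v + (N:ℂ)*τ))) + 2*(π:ℝ)*I*((k:ℕ):ℂ)*u)) := by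
            rw [h5]
        _ = _ := by rw [neg_neg, Complex.exp_add]
    calc Complex.exp (2*(π:ℝ)*I*((k:ℕ):ℂ)*(u+τ)) *
          (-(Complex.exp (-(π:ℂ)*I*(((2*N:ℕ):ℂ)*τ)) *
            Complex.exp (-2*(π:ℂ)*I*(v + ((k:ℕ):ℂ)*τ + (((2*N:ℕ):ℂ) - 1)/2))) *
            thetaFn (v + ((k:ℕ):ℂ)*τ + (((2*N:ℕ):ℂ) - 1)/2) (((2*N:ℕ):ℂ)*τ)) *
          RFn (((2*N:ℕ):ℂ)*u - v - ((k:ℕ):ℂ)*τ - (((2*N:ℕ):ℂ) - 1)/2) (((2*N:ℕ):ℂ)*τ)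
        = (Complex.exp (2*(π:ℝ)*I*((k:ℕ):ℂ)*(u+τ)) *
            -(Complex.exp (-(π:ℂ)*I*(((2*N:ℕ):ℂ)*τ)) *
              Complex.exp (-2*(π:ℂ)*I*(v + ((k:ℕ):ℂ)*τ + (((2*N:ℕ):ℂ) - 1)/2)))) *
          (thetaFn (v + ((k:ℕ):ℂ)*τ + (((2*N:ℕ):ℂ) - 1)/2) (((2*N:ℕ):ℂ)*τ) *
            RFn (((2*N:ℕ):ℂ)*u - v - ((k:ℕ):ℂ)*τ - (((2*N:ℕ):ℂ) - 1)/2) (((2*N:ℕ):ℂ)*τ)) := by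
          ring
      _ = (Complex.exp (-(2*(π:ℂ)*I*(v + (N:ℂ)*τ))) * Complex.exp (2*(π:ℝ)*I*((k:ℕ):ℂ)*u)) *
          (thetaFn (v + ((k:ℕ):ℂ)*τ + (((2*N:ℕ):ℂ) - 1)/2) (((2*N:ℕ):ℂ)*τ) *
            RFn (((2*N:ℕ):ℂ)*u - v - ((k:ℕ):ℂ)*τ - (((2*N:ℕ):ℂ) - 1)/2) (((2*N:ℕ):ℂ)*τ)) := by
          rw [hkey]
      _ = _ := by ring
  rw [hApart, Finset.sum_congr rfl hGpart, ← Finset.mul_sum]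
  ring
end L3sec
section L4sec
open Real

lemma two_pi_I_ne : (2*(π:ℂ)*I) ≠ 0 := by
  simp [Real.pi_ne_zero, Complex.I_ne_zero, Complex.ofReal_ne_zero]

lemma denom_ne (τ u : ℂ) (hu : ¬∃ a b : ℤ, u = a * τ + b) (m : ℤ) :
    1 - Complex.exp (2*(π:ℝ)*I*u) * Complex.exp (2*(π:ℝ)*I*τ) ^ m ≠ 0 := by
  intro h
  have hX : Complex.exp (2*(π:ℝ)*I*u + (m:ℂ)*(2*(π:ℝ)*I*τ)) = 1 := by
    rw [Complex.exp_add, Complex.exp_int_mul]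
    exact (sub_eq_zero.mp h).symm
  obtain ⟨n, hn⟩ := Complex.exp_eq_one_iff.mp hX
  apply hu
  refine ⟨-m, n, ?_⟩
  have key : u + (m:ℂ)*τ = (n:ℂ) := by
    apply mul_left_cancel₀ two_pi_I_ne
    linear_combination hn
  push_cast
  linear_combination key

lemma split_term (n ζ w : ℂ) (hD0 : 1 - ζ*w ≠ 0) (hζ : ζ ≠ 0) :
    n*w/(1 - ζ*w) = ζ⁻¹*(n/(1 - ζ*w)) - ζ⁻¹*n := by
  have hD : (1 - ζ*w)⁻¹ * (1 - ζ*w) = 1 := inv_mul_cancel₀ hD0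
  have hz : ζ⁻¹ * ζ = 1 := inv_mul_cancel₀ hζ
  rw [div_eq_mul_inv, div_eq_mul_inv]
  linear_combination (-(n*w*(1-ζ*w)⁻¹)) * hz - ζ⁻¹*n * hD

lemma theta_Nsum (N : ℕ) (v τ : ℂ) :
    thetaFn (v + (((2*N:ℕ):ℂ) - 1)/2) (((2*N:ℕ):ℂ)*τ) =
      I * Complex.exp ((π:ℂ)*I*(((2*N:ℕ):ℂ)*τ)/4 + (π:ℂ)*I*(v + (((2*N:ℕ):ℂ) - 1)/2)) *
        (∑' m : ℤ, Nterm (2*N) v τ m) := by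
  rw [tsum_Nterm_eq, thetaFn_eq]
  rw [show v + (((2*N:ℕ):ℂ) - 1)/2 + 1/2 + (((2*N:ℕ):ℂ)*τ)/2 =
      (v + (N:ℂ)*τ) + ((N:ℤ):ℂ) by push_cast; ring, jacobiTheta₂_add_int]
  congr 1
  rw [show ((π:ℂ)*I*(((2*N:ℕ):ℂ)*τ)/4 + (π:ℂ)*I*((v + (((2*N:ℕ):ℂ) - 1)/2) + 1/2)) =
      ((π:ℂ)*I*(((2*N:ℕ):ℂ)*τ)/4 + (π:ℂ)*I*(v + (((2*N:ℕ):ℂ) - 1)/2)) + (π:ℂ)*I/2 by ring,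
    Complex.exp_add, exp_pi_I_div_two]
  ring

lemma hatL4 (N : ℕ) (hN : 1 ≤ N) (τ u v : ℂ) (hτ : 0 < τ.im)
    (hu : ¬∃ a b : ℤ, u = a * τ + b) :
    appellHat (2*N) u (v + τ) τ =
      Complex.exp (-(2*(π:ℂ)*I*u)) * appellHat (2*N) u v τ := by
  have hTim : 0 < (((2*N:ℕ):ℂ)*τ).im := by
    rw [nat_mul_im]
    have h1 : (0:ℝ) < ((2*N:ℕ):ℝ) := by
      have : (2:ℕ) ≤ 2*N := by omega
      have := this
      positivity
    positivity
  have hTne : (((2*N:ℕ):ℂ)*τ).im ≠ 0 := ne_of_gt hTim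
  have hSA := summable_Aterm (2*N) (by omega) u v τ hτ
  have hSN := summable_Nterm N hN v τ hτ
  have hRsum := summable_Rterm (((2*N:ℕ):ℂ)*u - v - (((2*N:ℕ):ℂ) - 1)/2) (((2*N:ℕ):ℂ)*τ) hTim
  -- A part
  have hterm : ∀ m : ℤ, Aterm (2*N) u (v + τ) τ m =
      Complex.exp (-(2*(π:ℂ)*I*u)) * Aterm (2*N) u v τ m -
        Complex.exp (-(2*(π:ℂ)*I*u)) * Nterm (2*N) v τ m := by
    intro m
    have hstep1 : Aterm (2*N) u (v + τ) τ m =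
        Nterm (2*N) v τ m * Complex.exp (2*(π:ℝ)*I*τ) ^ m /
          (1 - Complex.exp (2*(π:ℝ)*I*u) * Complex.exp (2*(π:ℝ)*I*τ) ^ m) := by
      unfold Aterm Nterm
      have hsplit : Complex.exp (2*(π:ℝ)*I*(m:ℂ)*(v + τ)) =
          Complex.exp (2*(π:ℝ)*I*(m:ℂ)*v) * Complex.exp (2*(π:ℝ)*I*τ) ^ m := by
        rw [← Complex.exp_int_mul, ← Complex.exp_add]
        congr 1
        push_cast
        ring
      rw [hsplit]
      ring
    rw [hstep1, split_term _ _ _ (denom_ne τ u hu m) (Complex.exp_ne_zero _)]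
    rw [show (-(2*(π:ℂ)*I*u)) = -(2*(π:ℝ)*I*u) by push_cast; ring, Complex.exp_neg]
    rfl
  have sumeq : (∑' m : ℤ, Aterm (2*N) u (v + τ) τ m) =
      Complex.exp (-(2*(π:ℂ)*I*u)) * (∑' m : ℤ, Aterm (2*N) u v τ m) -
        Complex.exp (-(2*(π:ℂ)*I*u)) * (∑' m : ℤ, Nterm (2*N) v τ m) := by
    calc (∑' m : ℤ, Aterm (2*N) u (v + τ) τ m)
        = ∑' m : ℤ, (Complex.exp (-(2*(π:ℂ)*I*u)) * Aterm (2*N) u v τ m -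
            Complex.exp (-(2*(π:ℂ)*I*u)) * Nterm (2*N) v τ m) := tsum_congr hterm
      _ = (∑' m : ℤ, Complex.exp (-(2*(π:ℂ)*I*u)) * Aterm (2*N) u v τ m) -
          ∑' m : ℤ, Complex.exp (-(2*(π:ℂ)*I*u)) * Nterm (2*N) v τ m :=
          Summable.tsum_sub (hSA.mul_left _) (hSN.mul_left _)
      _ = _ := by rw [tsum_mul_left, tsum_mul_left]
  -- correction part : reindex
  have hGstep : ∀ k ∈ Finset.range (2*N), Gterm (2*N) u (v + τ) τ k =
      Complex.exp (-(2*(π:ℂ)*I*u)) * Gterm (2*N) u v τ (k+1) := by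
    intro k _
    unfold Gterm
    rw [show v + τ + ((k:ℕ):ℂ)*τ + (((2*N:ℕ):ℂ) - 1)/2 =
        v + (((k+1:ℕ)):ℂ)*τ + (((2*N:ℕ):ℂ) - 1)/2 by push_cast; ring]
    rw [show ((2*N:ℕ):ℂ)*u - (v + τ) - ((k:ℕ):ℂ)*τ - (((2*N:ℕ):ℂ) - 1)/2 =
        ((2*N:ℕ):ℂ)*u - v - (((k+1:ℕ)):ℂ)*τ - (((2*N:ℕ):ℂ) - 1)/2 by push_cast; ring]
    have he : Complex.exp (-(2*(π:ℂ)*I*u)) * Complex.exp (2*(π:ℝ)*I*(((k+1:ℕ)):ℂ)*u) =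
        Complex.exp (2*(π:ℝ)*I*((k:ℕ):ℂ)*u) := by
      rw [← Complex.exp_add]
      congr 1
      push_cast
      ring
    rw [← he]
    ring
  have hsumre : (∑ k ∈ Finset.range (2*N), Gterm (2*N) u v τ (k+1)) =
      (∑ k ∈ Finset.range (2*N), Gterm (2*N) u v τ k) +
        Gterm (2*N) u v τ (2*N) - Gterm (2*N) u v τ 0 := by
    have h1 := Finset.sum_range_succ' (Gterm (2*N) u v τ) (2*N)
    have h2 := Finset.sum_range_succ (Gterm (2*N) u v τ) (2*N)
    linear_combination h2 - h1
  have hcorr : (∑ k ∈ Finset.range (2*N), Gterm (2*N) u (v + τ) τ k) =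
      Complex.exp (-(2*(π:ℂ)*I*u)) *
        ((∑ k ∈ Finset.range (2*N), Gterm (2*N) u v τ k) +
          Gterm (2*N) u v τ (2*N) - Gterm (2*N) u v τ 0) := by
    rw [Finset.sum_congr rfl hGstep, ← Finset.mul_sum, hsumre]
  -- boundary terms
  have hG0 : Gterm (2*N) u v τ 0 =
      thetaFn (v + (((2*N:ℕ):ℂ) - 1)/2) (((2*N:ℕ):ℂ)*τ) *
        RFn (((2*N:ℕ):ℂ)*u - v - (((2*N:ℕ):ℂ) - 1)/2) (((2*N:ℕ):ℂ)*τ) := by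
    unfold Gterm
    norm_num
  have hGl : Gterm (2*N) u v τ (2*N) =
      thetaFn (v + (((2*N:ℕ):ℂ) - 1)/2) (((2*N:ℕ):ℂ)*τ) *
        RFn (((2*N:ℕ):ℂ)*u - v - (((2*N:ℕ):ℂ) - 1)/2) (((2*N:ℕ):ℂ)*τ) +
      (-2) * thetaFn (v + (((2*N:ℕ):ℂ) - 1)/2) (((2*N:ℕ):ℂ)*τ) *
        Complex.exp ((π:ℂ)*I*(((2*N:ℕ):ℂ)*u) - (π:ℂ)*I*(v + (((2*N:ℕ):ℂ) - 1)/2) -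
          (π:ℂ)*I*(((2*N:ℕ):ℂ)*τ)/4) := by
    unfold Gterm
    rw [show v + ((2*N:ℕ):ℂ)*τ + (((2*N:ℕ):ℂ) - 1)/2 =
        (v + (((2*N:ℕ):ℂ) - 1)/2) + ((2*N:ℕ):ℂ)*τ by ring, thetaFn_add_T]
    rw [show ((2*N:ℕ):ℂ)*u - v - ((2*N:ℕ):ℂ)*τ - (((2*N:ℕ):ℂ) - 1)/2 =
        (((2*N:ℕ):ℂ)*u - v - (((2*N:ℕ):ℂ) - 1)/2) - ((2*N:ℕ):ℂ)*τ by ring,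
      RFn_sub_T _ _ hTne hRsum]
    have hone : Complex.exp (2*(π:ℝ)*I*((2*N:ℕ):ℂ)*u) *
        Complex.exp (-(π:ℂ)*I*(((2*N:ℕ):ℂ)*τ)) *
        Complex.exp (-2*(π:ℂ)*I*(v + (((2*N:ℕ):ℂ) - 1)/2)) *
        Complex.exp ((π:ℂ)*I*(((2*N:ℕ):ℂ)*τ)) *
        Complex.exp (-2*(π:ℂ)*I*(((2*N:ℕ):ℂ)*u - v - (((2*N:ℕ):ℂ) - 1)/2)) = 1 := by
      simp only [← Complex.exp_add]
      rw [show (2*(π:ℝ)*I*((2*N:ℕ):ℂ)*u + -(π:ℂ)*I*(((2*N:ℕ):ℂ)*τ) +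
          -2*(π:ℂ)*I*(v + (((2*N:ℕ):ℂ) - 1)/2) + (π:ℂ)*I*(((2*N:ℕ):ℂ)*τ) +
          -2*(π:ℂ)*I*(((2*N:ℕ):ℂ)*u - v - (((2*N:ℕ):ℂ) - 1)/2)) = 0 by push_cast; ring]
      exact Complex.exp_zero
    have hE2 : Complex.exp (-(π:ℂ)*I*(((2*N:ℕ):ℂ)*τ)/4) *
        Complex.exp ((π:ℂ)*I*(((2*N:ℕ):ℂ)*u - v - (((2*N:ℕ):ℂ) - 1)/2)) =
        Complex.exp ((π:ℂ)*I*(((2*N:ℕ):ℂ)*u) - (π:ℂ)*I*(v + (((2*N:ℕ):ℂ) - 1)/2) -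
          (π:ℂ)*I*(((2*N:ℕ):ℂ)*τ)/4) := by
      rw [← Complex.exp_add]
      congr 1
      ring
    calc Complex.exp (2*(π:ℝ)*I*((2*N:ℕ):ℂ)*u) *
          (-(Complex.exp (-(π:ℂ)*I*(((2*N:ℕ):ℂ)*τ)) *
            Complex.exp (-2*(π:ℂ)*I*(v + (((2*N:ℕ):ℂ) - 1)/2))) *
            thetaFn (v + (((2*N:ℕ):ℂ) - 1)/2) (((2*N:ℕ):ℂ)*τ)) *
          (-(Complex.exp ((π:ℂ)*I*(((2*N:ℕ):ℂ)*τ)) *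
              Complex.exp (-2*(π:ℂ)*I*(((2*N:ℕ):ℂ)*u - v - (((2*N:ℕ):ℂ) - 1)/2))) *
            RFn (((2*N:ℕ):ℂ)*u - v - (((2*N:ℕ):ℂ) - 1)/2) (((2*N:ℕ):ℂ)*τ) +
            2 * Complex.exp ((π:ℂ)*I*(((2*N:ℕ):ℂ)*τ)) *
              Complex.exp (-2*(π:ℂ)*I*(((2*N:ℕ):ℂ)*u - v - (((2*N:ℕ):ℂ) - 1)/2)) *
              Complex.exp (-(π:ℂ)*I*(((2*N:ℕ):ℂ)*τ)/4) *
              Complex.exp ((π:ℂ)*I*(((2*N:ℕ):ℂ)*u - v - (((2*N:ℕ):ℂ) - 1)/2)))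
        = (Complex.exp (2*(π:ℝ)*I*((2*N:ℕ):ℂ)*u) *
            Complex.exp (-(π:ℂ)*I*(((2*N:ℕ):ℂ)*τ)) *
            Complex.exp (-2*(π:ℂ)*I*(v + (((2*N:ℕ):ℂ) - 1)/2)) *
            Complex.exp ((π:ℂ)*I*(((2*N:ℕ):ℂ)*τ)) *
            Complex.exp (-2*(π:ℂ)*I*(((2*N:ℕ):ℂ)*u - v - (((2*N:ℕ):ℂ) - 1)/2))) *
          (thetaFn (v + (((2*N:ℕ):ℂ) - 1)/2) (((2*N:ℕ):ℂ)*τ) *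
            RFn (((2*N:ℕ):ℂ)*u - v - (((2*N:ℕ):ℂ) - 1)/2) (((2*N:ℕ):ℂ)*τ)) +
          (-2) * thetaFn (v + (((2*N:ℕ):ℂ) - 1)/2) (((2*N:ℕ):ℂ)*τ) *
          (Complex.exp (2*(π:ℝ)*I*((2*N:ℕ):ℂ)*u) *
            Complex.exp (-(π:ℂ)*I*(((2*N:ℕ):ℂ)*τ)) *
            Complex.exp (-2*(π:ℂ)*I*(v + (((2*N:ℕ):ℂ) - 1)/2)) *
            Complex.exp ((π:ℂ)*I*(((2*N:ℕ):ℂ)*τ)) *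
            Complex.exp (-2*(π:ℂ)*I*(((2*N:ℕ):ℂ)*u - v - (((2*N:ℕ):ℂ) - 1)/2)) *
            Complex.exp (-(π:ℂ)*I*(((2*N:ℕ):ℂ)*τ)/4) *
            Complex.exp ((π:ℂ)*I*(((2*N:ℕ):ℂ)*u - v - (((2*N:ℕ):ℂ) - 1)/2))) := by ring
      _ = _ := by
          rw [hone]
          linear_combination ((-2) * thetaFn (v + (((2*N:ℕ):ℂ) - 1)/2) (((2*N:ℕ):ℂ)*τ)) * hE2
  -- cancellation of theta series against the extra A-term
  have hPQ : Complex.exp ((π:ℂ)*I*(((2*N:ℕ):ℂ)*τ)/4 + (π:ℂ)*I*(v + (((2*N:ℕ):ℂ) - 1)/2)) *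
      Complex.exp ((π:ℂ)*I*(((2*N:ℕ):ℂ)*u) - (π:ℂ)*I*(v + (((2*N:ℕ):ℂ) - 1)/2) -
        (π:ℂ)*I*(((2*N:ℕ):ℂ)*τ)/4) = Complex.exp ((π:ℝ)*I*((2*N:ℕ):ℂ)*u) := by
    rw [← Complex.exp_add]
    congr 1
    push_cast
    ring
  have hcancel : (I/2) * ((-2) * thetaFn (v + (((2*N:ℕ):ℂ) - 1)/2) (((2*N:ℕ):ℂ)*τ) *
      Complex.exp ((π:ℂ)*I*(((2*N:ℕ):ℂ)*u) - (π:ℂ)*I*(v + (((2*N:ℕ):ℂ) - 1)/2) -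
        (π:ℂ)*I*(((2*N:ℕ):ℂ)*τ)/4)) =
      Complex.exp ((π:ℝ)*I*((2*N:ℕ):ℂ)*u) * (∑' m : ℤ, Nterm (2*N) v τ m) := by
    rw [theta_Nsum]
    rw [← hPQ]
    have hII := Complex.I_mul_I
    linear_combination (-(Complex.exp ((π:ℂ)*I*(((2*N:ℕ):ℂ)*τ)/4 +
        (π:ℂ)*I*(v + (((2*N:ℕ):ℂ) - 1)/2)) *
      Complex.exp ((π:ℂ)*I*(((2*N:ℕ):ℂ)*u) - (π:ℂ)*I*(v + (((2*N:ℕ):ℂ) - 1)/2) -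
        (π:ℂ)*I*(((2*N:ℕ):ℂ)*τ)/4) * (∑' m : ℤ, Nterm (2*N) v τ m))) * hII
  -- assemble
  rw [appellHat_eq, appellHat_eq, appell_eq, appell_eq, sumeq, hcorr, hGl, hG0]
  linear_combination Complex.exp (-(2*(π:ℂ)*I*u)) * hcancel
end L4sec
section Final
open Real

lemma lattice_shift (τ u : ℂ) (hu : ¬∃ a b : ℤ, u = a * τ + b) (p : ℤ) :
    ¬∃ a b : ℤ, u + (p:ℂ)*τ = a * τ + b := by
  rintro ⟨a, b, h⟩
  exact hu ⟨a - p, b, by push_cast; linear_combination h⟩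

lemma exp_mul_exp_neg (x : ℂ) : Complex.exp x * Complex.exp (-x) = 1 := by
  rw [← Complex.exp_add]; simp

lemma hatL4Z (N : ℕ) (hN : 1 ≤ N) (τ u : ℂ) (hτ : 0 < τ.im)
    (hu : ¬∃ a b : ℤ, u = a * τ + b) (e : ℤ) (v : ℂ) :
    appellHat (2*N) u (v + (e:ℂ)*τ) τ =
      Complex.exp (2*(π:ℂ)*I*u) ^ (-e) * appellHat (2*N) u v τ := by
  induction e using Int.induction_on generalizing v with
  | zero => simp
  | succ n ih =>
      have h1 : v + (((n:ℤ)+1:ℤ):ℂ)*τ = (v + ((n:ℤ):ℂ)*τ) + τ := by push_cast; ring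
      rw [h1, hatL4 N hN τ u _ hτ hu, ih v]
      rw [show (-((n:ℤ)+1)) = -(n:ℤ) - 1 by ring, zpow_sub_one₀ (Complex.exp_ne_zero _),
        ← Complex.exp_neg]
      ring
  | pred n ih =>
      have h1 : (v + ((-(n:ℤ)-1:ℤ):ℂ)*τ) + τ = v + ((-(n:ℤ):ℤ):ℂ)*τ := by push_cast; ring
      have h2 := hatL4 N hN τ u (v + ((-(n:ℤ)-1:ℤ):ℂ)*τ) hτ hu
      rw [h1] at h2
      have h3 : appellHat (2*N) u (v + ((-(n:ℤ)-1:ℤ):ℂ)*τ) τ =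
          Complex.exp (2*(π:ℂ)*I*u) * appellHat (2*N) u (v + ((-(n:ℤ):ℤ):ℂ)*τ) τ := by
        rw [h2]
        calc appellHat (2*N) u (v + ((-(n:ℤ)-1:ℤ):ℂ)*τ) τ
            = (Complex.exp (2*(π:ℂ)*I*u) * Complex.exp (-(2*(π:ℂ)*I*u))) *
              appellHat (2*N) u (v + ((-(n:ℤ)-1:ℤ):ℂ)*τ) τ := by
              rw [exp_mul_exp_neg, one_mul]
          _ = _ := by ring
      rw [h3, ih v]
      rw [show (-(-(n:ℤ)-1)) = (-(-(n:ℤ))) + 1 by ring, zpow_add_one₀ (Complex.exp_ne_zero _)]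
      ring

lemma hatL3Z (N : ℕ) (τ u v : ℂ) (a : ℤ) :
    appellHat (2*N) (u + (a:ℂ)*τ) (v + (a:ℂ)*(((2*N:ℕ):ℂ)*τ)) τ =
      Complex.exp (2*(π:ℂ)*I*v) ^ (-a) *
        Complex.exp (2*(π:ℂ)*I*τ) ^ (-((N:ℤ)*a^2)) * appellHat (2*N) u v τ := by
  induction a using Int.induction_on with
  | zero => simp
  | succ n ih =>
      have h1 : u + (((n:ℤ)+1:ℤ):ℂ)*τ = (u + ((n:ℤ):ℂ)*τ) + τ := by push_cast; ring
      have h2 : v + (((n:ℤ)+1:ℤ):ℂ)*(((2*N:ℕ):ℂ)*τ) =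
          (v + ((n:ℤ):ℂ)*(((2*N:ℕ):ℂ)*τ)) + ((2*N:ℕ):ℂ)*τ := by push_cast; ring
      rw [h1, h2, hatL3 N τ _ _, ih]
      have hfac : Complex.exp (-(2*(π:ℂ)*I*((v + ((n:ℤ):ℂ)*(((2*N:ℕ):ℂ)*τ)) + (N:ℂ)*τ))) =
          Complex.exp (-(2*(π:ℂ)*I*v)) *
            Complex.exp (2*(π:ℂ)*I*τ) ^ (-(2*(N:ℤ)*n + N)) := by
        rw [← Complex.exp_int_mul, ← Complex.exp_add]
        congr 1
        push_cast
        ring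
      rw [hfac]
      rw [show (-((n:ℤ)+1)) = -(n:ℤ) - 1 by ring, zpow_sub_one₀ (Complex.exp_ne_zero _),
        ← Complex.exp_neg]
      rw [show (-((N:ℤ)*((n:ℤ)+1)^2)) = (-((N:ℤ)*(n:ℤ)^2)) + (-(2*(N:ℤ)*n + N)) by ring,
        zpow_add₀ (Complex.exp_ne_zero _)]
      ring
  | pred n ih =>
      have h1 : (u + ((-(n:ℤ)-1:ℤ):ℂ)*τ) + τ = u + ((-(n:ℤ):ℤ):ℂ)*τ := by push_cast; ring
      have h2 : (v + ((-(n:ℤ)-1:ℤ):ℂ)*(((2*N:ℕ):ℂ)*τ)) + ((2*N:ℕ):ℂ)*τ =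
          v + ((-(n:ℤ):ℤ):ℂ)*(((2*N:ℕ):ℂ)*τ) := by push_cast; ring
      have h3 := hatL3 N τ (u + ((-(n:ℤ)-1:ℤ):ℂ)*τ) (v + ((-(n:ℤ)-1:ℤ):ℂ)*(((2*N:ℕ):ℂ)*τ))
      rw [h1, h2] at h3
      have hfac : Complex.exp (-(2*(π:ℂ)*I*((v + ((-(n:ℤ)-1:ℤ):ℂ)*(((2*N:ℕ):ℂ)*τ)) + (N:ℂ)*τ))) =
          Complex.exp (-(2*(π:ℂ)*I*v)) *
            Complex.exp (2*(π:ℂ)*I*τ) ^ (2*(N:ℤ)*n + N) := by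
        rw [← Complex.exp_int_mul, ← Complex.exp_add]
        congr 1
        push_cast
        ring
      have h4 : appellHat (2*N) (u + ((-(n:ℤ)-1:ℤ):ℂ)*τ) (v + ((-(n:ℤ)-1:ℤ):ℂ)*(((2*N:ℕ):ℂ)*τ)) τ =
          Complex.exp (2*(π:ℂ)*I*v) *
            Complex.exp (2*(π:ℂ)*I*τ) ^ (-(2*(N:ℤ)*n + N)) *
            appellHat (2*N) (u + ((-(n:ℤ):ℤ):ℂ)*τ) (v + ((-(n:ℤ):ℤ):ℂ)*(((2*N:ℕ):ℂ)*τ)) τ := by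
        rw [h3, hfac]
        have hq := exp_mul_exp_neg (2*(π:ℂ)*I*v)
        have hq2 : Complex.exp (2*(π:ℂ)*I*τ) ^ (-(2*(N:ℤ)*n + N)) *
            Complex.exp (2*(π:ℂ)*I*τ) ^ (2*(N:ℤ)*n + N) = 1 := by
          rw [← zpow_add₀ (Complex.exp_ne_zero _),
            show (-(2*(N:ℤ)*n + N) + (2*(N:ℤ)*n + N)) = 0 by ring, zpow_zero]
        calc appellHat (2*N) (u + ((-(n:ℤ)-1:ℤ):ℂ)*τ) (v + ((-(n:ℤ)-1:ℤ):ℂ)*(((2*N:ℕ):ℂ)*τ)) τ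
            = (Complex.exp (2*(π:ℂ)*I*v) * Complex.exp (-(2*(π:ℂ)*I*v))) *
              ((Complex.exp (2*(π:ℂ)*I*τ) ^ (-(2*(N:ℤ)*n + N)) *
                Complex.exp (2*(π:ℂ)*I*τ) ^ (2*(N:ℤ)*n + N))) *
              appellHat (2*N) (u + ((-(n:ℤ)-1:ℤ):ℂ)*τ) (v + ((-(n:ℤ)-1:ℤ):ℂ)*(((2*N:ℕ):ℂ)*τ)) τ := by
              rw [hq, hq2, one_mul, one_mul]
          _ = _ := by ring
      rw [h4, ih]
      rw [show (-(-(n:ℤ)-1)) = (-(-(n:ℤ))) + 1 by ring, zpow_add_one₀ (Complex.exp_ne_zero _)]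
      rw [show (-((N:ℤ)*(-(n:ℤ)-1)^2)) = (-((N:ℤ)*(-(n:ℤ))^2)) + (-(2*(N:ℤ)*n + N)) by ring,
        zpow_add₀ (Complex.exp_ne_zero _)]
      ring

lemma hatMain (N : ℕ) (hN : 1 ≤ N) (τ : ℂ) (hτ : 0 < τ.im) (u v : ℂ)
    (hu : ¬∃ a b : ℤ, u = a * τ + b) (a b c d : ℤ) :
    appellHat (2*N) (u + (a:ℂ)*τ + (b:ℂ)) (v + (c:ℂ)*τ + (d:ℂ)) τ =
      Complex.exp (2*(π:ℂ)*I*u) ^ (2*(N:ℤ)*a - c) *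
        Complex.exp (2*(π:ℂ)*I*v) ^ (-a) *
          Complex.exp (2*(π:ℂ)*I*τ) ^ ((N:ℤ)*a^2 - a*c) * appellHat (2*N) u v τ := by
  rw [show u + (a:ℂ)*τ + (b:ℂ) = (u + (a:ℂ)*τ) + (b:ℂ) by ring, hatL1]
  rw [show v + (c:ℂ)*τ + (d:ℂ) = (v + (c:ℂ)*τ) + (d:ℂ) by ring, hatL2]
  rw [show v + (c:ℂ)*τ = (v + (a:ℂ)*(((2*N:ℕ):ℂ)*τ)) + (((c - 2*(N:ℤ)*a):ℤ):ℂ)*τ by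
    push_cast; ring]
  rw [hatL4Z N hN τ (u + (a:ℂ)*τ) hτ (lattice_shift τ u hu a), hatL3Z]
  have hsplit : Complex.exp (2*(π:ℂ)*I*(u + (a:ℂ)*τ)) =
      Complex.exp (2*(π:ℂ)*I*u) * Complex.exp (2*(π:ℂ)*I*τ) ^ a := by
    rw [← Complex.exp_int_mul, ← Complex.exp_add]
    congr 1
    push_cast
    ring
  rw [hsplit, mul_zpow]
  rw [show (-(c - 2*(N:ℤ)*a)) = 2*(N:ℤ)*a - c by ring]
  rw [show (Complex.exp (2*(π:ℂ)*I*τ) ^ a) ^ (2*(N:ℤ)*a - c) =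
      Complex.exp (2*(π:ℂ)*I*τ) ^ (a*(2*(N:ℤ)*a - c)) by rw [← zpow_mul]]
  rw [show ((N:ℤ)*a^2 - a*c) = (a*(2*(N:ℤ)*a - c)) + (-((N:ℤ)*a^2)) by ring,
    zpow_add₀ (Complex.exp_ne_zero _)]
  ring
end Final


theorem stmt11 (N : ℕ) (hN : 1 ≤ N) (τ z w : ℂ) (hτ : 0 < τ.im)
    (hw : ¬∃ a b : ℤ, w = a * τ + b) (m₁ m₂ ℓ₁ ℓ₂ : ℤ) :
    fNhat N (z + m₁ * τ + ℓ₁) (w + m₂ * τ + ℓ₂) τ =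
      Complex.exp (2 * Real.pi * I * z) ^ (-m₂) *
        Complex.exp (2 * Real.pi * I * w) ^ (2 * N * m₂ - m₁) *
          Complex.exp (2 * Real.pi * I * τ) ^ ((N : ℤ) * m₂ ^ 2 - m₁ * m₂) *
            fNhat N z w τ := by
  show appellHat (2*N) (w + m₂ * τ + ℓ₂) (z + m₁ * τ + ℓ₁) τ = _
  rw [hatMain N hN τ hτ w z hw m₂ ℓ₂ m₁ ℓ₁]
  rw [show ((N:ℤ)*m₂^2 - m₂*m₁) = ((N:ℤ)*m₂^2 - m₁*m₂) by ring]
  show _ = _ * appellHat (2*N) w z τ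
  ring
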